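/- arXiv:2301.10526 — 4 statements merged into one kernel-verified Lean document; each statement's English description precedes it below -/
import Mathlib

section
/- Under pairwise orthogonal channels, the DPC sum-rate under any power allocation {p_k} with ∑ p_k ≤ P_max is upper bounded by ∑_k log2(1 + p_k ||h_k||^2/σ^2), and this bound is achieved by zero-forcing; hence the ZF sum-rate equals the DPC sum-rate. -/
/-!
Fix a user `k`. In the DPC rate the interference of the users encoded after `k` enters the
numerator and the denominator alike, so dropping it can only increase the rate; what remains is
bounded by the single-user rate `log₂ (1 + tr S_k ‖h_k‖² / σ²)` because `h^H S h ≤ tr S ‖h‖²` for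
`S ⪰ 0`. With orthogonal channels, the matched beamformer `w_k = √(p_k / ‖h_k‖²) h_k` is
zero-forcing and attains this bound. Conversely, for zero-forcing beamformers the covariances
`S_k = w_k w_k^H` make user `k` see no interference at all, so each DPC rate equals the ZF rate.
-/

open Matrix ComplexOrder

section QuadraticForm

variable {n : Type*} [Fintype n]

lemma re_star_dotProduct_self (u : n → ℂ) : (star u ⬝ᵥ u).re = ∑ i, ‖u i‖ ^ 2 := by
  simp [dotProduct, Complex.re_sum, Complex.mul_re, Complex.sq_norm, Complex.normSq_apply]

lemma re_star_dotProduct_self_nonneg (u : n → ℂ) : 0 ≤ (star u ⬝ᵥ u).re :=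
  (Complex.nonneg_iff.mp (dotProduct_star_self_nonneg u)).1

lemma norm_dotProduct_sq_le (a b : n → ℂ) :
    ‖a ⬝ᵥ b‖ ^ 2 ≤ (∑ i, ‖a i‖ ^ 2) * ∑ i, ‖b i‖ ^ 2 := by
  have htriangle : ‖a ⬝ᵥ b‖ ≤ ∑ i, ‖a i‖ * ‖b i‖ :=
    (norm_sum_le _ _).trans_eq (by simp only [norm_mul])
  exact (pow_le_pow_left₀ (norm_nonneg _) htriangle 2).trans
    (Finset.sum_mul_sq_le_sq_mul_sq _ _ _)

open scoped MatrixOrder Matrix.Norms.L2Operator in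
lemma Matrix.PosSemidef.exists_eq_conjTranspose_mul_self {S : Matrix n n ℂ}
    (hS : S.PosSemidef) : ∃ B : Matrix n n ℂ, S = Bᴴ * B := by
  classical
  exact CStarAlgebra.nonneg_iff_eq_star_mul_self.mp hS.nonneg

lemma re_trace_conjTranspose_mul_self (B : Matrix n n ℂ) :
    (Bᴴ * B).trace.re = ∑ i, ∑ j, ‖B i j‖ ^ 2 := by
  rw [trace_mul_comm, trace, Complex.re_sum]
  refine Finset.sum_congr rfl fun i _ => ?_
  rw [diag_apply, mul_apply, ← re_star_dotProduct_self, dotProduct_comm]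
  rfl

lemma Matrix.PosSemidef.re_dotProduct_mulVec_le {S : Matrix n n ℂ} (hS : S.PosSemidef)
    (v : n → ℂ) : (star v ⬝ᵥ S *ᵥ v).re ≤ S.trace.re * (star v ⬝ᵥ v).re := by
  obtain ⟨B, rfl⟩ := hS.exists_eq_conjTranspose_mul_self
  rw [← mulVec_mulVec, dotProduct_mulVec, ← star_mulVec, re_star_dotProduct_self,
    re_trace_conjTranspose_mul_self, re_star_dotProduct_self, Finset.sum_mul]
  exact Finset.sum_le_sum fun i _ => norm_dotProduct_sq_le (B i) v

lemma re_star_dotProduct_vecMulVec_mulVec (w x : n → ℂ) :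
    (star x ⬝ᵥ vecMulVec w (star w) *ᵥ x).re = ‖star x ⬝ᵥ w‖ ^ 2 := by
  rw [vecMulVec_mulVec, dotProduct_smul, op_smul_eq_mul, star_dotProduct w x, Complex.star_def,
    Complex.mul_conj, Complex.ofReal_re, Complex.normSq_eq_norm_sq]

lemma re_star_dotProduct_ofReal_smul (c : ℝ) (u : n → ℂ) :
    (star ((c : ℂ) • u) ⬝ᵥ ((c : ℂ) • u)).re = c ^ 2 * (star u ⬝ᵥ u).re := by
  rw [star_smul, smul_dotProduct, dotProduct_smul, smul_eq_mul, smul_eq_mul, Complex.star_def,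
    Complex.conj_ofReal, ← mul_assoc, ← Complex.ofReal_mul, Complex.re_ofReal_mul, sq]

lemma norm_star_dotProduct_ofReal_smul (c : ℝ) (u : n → ℂ) :
    ‖star u ⬝ᵥ ((c : ℂ) • u)‖ = |c| * (star u ⬝ᵥ u).re := by
  rw [dotProduct_smul, smul_eq_mul, norm_mul, Complex.norm_real, Real.norm_eq_abs,
    Complex.re_eq_norm.mpr (dotProduct_star_self_nonneg u)]

end QuadraticForm

lemma div_add_le_one_add_div {σ b x c : ℝ} (hσ : 0 < σ) (hb : 0 ≤ b) (hx : 0 ≤ x)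
    (hxc : x ≤ c) : (σ + (x + b)) / (σ + b) ≤ 1 + c / σ := by
  have hσb : σ + b ≠ 0 := by positivity
  calc (σ + (x + b)) / (σ + b) = 1 + x / (σ + b) := by field_simp; ring
    _ ≤ 1 + x / σ := by gcongr; linarith
    _ ≤ 1 + c / σ := by gcongr

section Rates

variable {ι n : Type*} [Fintype n]

/-- Users are encoded in decreasing order of `ι`, so user `k` sees the signals of the users
`i > k` as interference while those of `i < k` are pre-cancelled. -/
noncomputable def dpcRate [LinearOrder ι] [LocallyFiniteOrderTop ι] (σ2 : ℝ) (h : ι → n → ℂ)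
    (S : ι → Matrix n n ℂ) (k : ι) : ℝ :=
  Real.logb 2 ((σ2 + (star (h k) ⬝ᵥ (∑ i ∈ Finset.Ici k, S i) *ᵥ h k).re) /
    (σ2 + (star (h k) ⬝ᵥ (∑ i ∈ Finset.Ioi k, S i) *ᵥ h k).re))

noncomputable def zfRate (σ2 : ℝ) (h w : ι → n → ℂ) (k : ι) : ℝ :=
  Real.logb 2 (1 + ‖star (h k) ⬝ᵥ w k‖ ^ 2 / σ2)

def IsZeroForcing (h w : ι → n → ℂ) : Prop :=
  ∀ k m, m ≠ k → star (h m) ⬝ᵥ w k = 0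

lemma dpcRate_le [LinearOrder ι] [LocallyFiniteOrderTop ι] {σ2 : ℝ} (hσ : 0 < σ2)
    (h : ι → n → ℂ) {S : ι → Matrix n n ℂ} (hS : ∀ i, (S i).PosSemidef) (k : ι) :
    dpcRate σ2 h S k ≤ Real.logb 2 (1 + (S k).trace.re * (star (h k) ⬝ᵥ h k).re / σ2) := by
  have hown : 0 ≤ (star (h k) ⬝ᵥ S k *ᵥ h k).re := (hS k).re_dotProduct_nonneg (h k)
  have hlater : 0 ≤ (star (h k) ⬝ᵥ (∑ i ∈ Finset.Ioi k, S i) *ᵥ h k).re := by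
    simp only [sum_mulVec, dotProduct_sum, Complex.re_sum]
    exact Finset.sum_nonneg fun i _ => (hS i).re_dotProduct_nonneg (h k)
  rw [dpcRate, ← Finset.add_sum_Ioi_eq_sum_Ici, add_mulVec, dotProduct_add, Complex.add_re]
  refine Real.logb_le_logb_of_le one_lt_two (div_pos (by linarith) (by linarith)) ?_
  exact div_add_le_one_add_div hσ hlater hown ((hS k).re_dotProduct_mulVec_le (h k))

lemma dpcRate_vecMulVec_eq_zfRate [LinearOrder ι] [LocallyFiniteOrderTop ι] {σ2 : ℝ}
    (hσ : σ2 ≠ 0) {h w : ι → n → ℂ} (hw : IsZeroForcing h w) (k : ι) :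
    dpcRate σ2 h (fun i => vecMulVec (w i) (star (w i))) k = zfRate σ2 h w k := by
  have hlater : (star (h k) ⬝ᵥ (∑ i ∈ Finset.Ioi k, vecMulVec (w i) (star (w i))) *ᵥ h k).re
      = 0 := by
    simp only [sum_mulVec, dotProduct_sum, Complex.re_sum, re_star_dotProduct_vecMulVec_mulVec]
    refine Finset.sum_eq_zero fun i hi => ?_
    rw [hw i k (Finset.mem_Ioi.mp hi).ne, norm_zero, sq, mul_zero]
  rw [dpcRate, zfRate, ← Finset.add_sum_Ioi_eq_sum_Ici, add_mulVec, dotProduct_add,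
    Complex.add_re, hlater, re_star_dotProduct_vecMulVec_mulVec, add_zero, add_zero, add_div,
    div_self hσ]

/-- Its power is `p k` only when `h k ≠ 0`; for `h k = 0` it is `0`, whence the `≤` below. -/
noncomputable def matchedBeamformer (h : ι → n → ℂ) (p : ι → ℝ) (k : ι) : n → ℂ :=
  (√(p k / (star (h k) ⬝ᵥ h k).re) : ℂ) • h k

lemma isZeroForcing_matchedBeamformer {h : ι → n → ℂ}
    (horth : ∀ k m, k ≠ m → star (h k) ⬝ᵥ h m = 0) (p : ι → ℝ) :
    IsZeroForcing h (matchedBeamformer h p) := by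
  intro k m hmk
  rw [matchedBeamformer, dotProduct_smul, horth m k hmk, smul_zero]

lemma re_star_dotProduct_matchedBeamformer_le (h : ι → n → ℂ) {p : ι → ℝ} {k : ι}
    (hp : 0 ≤ p k) : (star (matchedBeamformer h p k) ⬝ᵥ matchedBeamformer h p k).re ≤ p k := by
  have hN := re_star_dotProduct_self_nonneg (h k)
  rw [matchedBeamformer, re_star_dotProduct_ofReal_smul, Real.sq_sqrt (by positivity)]
  rcases hN.eq_or_lt with hN | hN
  · simp [← hN, hp]
  · rw [div_mul_cancel₀ _ hN.ne']

lemma zfRate_matchedBeamformer (σ2 : ℝ) (h : ι → n → ℂ) {p : ι → ℝ} {k : ι} (hp : 0 ≤ p k) :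
    zfRate σ2 h (matchedBeamformer h p) k =
      Real.logb 2 (1 + p k * (star (h k) ⬝ᵥ h k).re / σ2) := by
  have hN := re_star_dotProduct_self_nonneg (h k)
  have hgain : ‖star (h k) ⬝ᵥ matchedBeamformer h p k‖ ^ 2 = p k * (star (h k) ⬝ᵥ h k).re := by
    rw [matchedBeamformer, norm_star_dotProduct_ofReal_smul, mul_pow, sq_abs,
      Real.sq_sqrt (by positivity)]
    rcases hN.eq_or_lt with hN | hN
    · simp [← hN]
    · field_simp
  rw [zfRate, hgain]

end Rates

open Matrix ComplexOrder in
theorem stmt_4_general (K M : ℕ) (h : Fin K → Fin M → ℂ)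
    (horth : ∀ k m, k ≠ m → star (h k) ⬝ᵥ h m = 0)
    (σ2 P : ℝ) (hσ : 0 < σ2) :
    (∀ S : Fin K → Matrix (Fin M) (Fin M) ℂ, (∀ k, (S k).PosSemidef) →
      (∑ k, ((S k).trace).re ≤ P) →
      (∑ k, Real.logb 2 ((σ2 + (star (h k) ⬝ᵥ (∑ i ∈ Finset.Ici k, S i).mulVec (h k)).re) /
            (σ2 + (star (h k) ⬝ᵥ (∑ i ∈ Finset.Ioi k, S i).mulVec (h k)).re))
        ≤ ∑ k, Real.logb 2 (1 + ((S k).trace).re * (star (h k) ⬝ᵥ h k).re / σ2)) ∧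
      ∃ w : Fin K → Fin M → ℂ,
        (∀ k m, m ≠ k → star (h m) ⬝ᵥ w k = 0) ∧
        (∑ k, (star (w k) ⬝ᵥ w k).re) ≤ P ∧
        ∀ k, Real.logb 2 (1 + ‖star (h k) ⬝ᵥ w k‖ ^ 2 / σ2)
          = Real.logb 2 (1 + ((S k).trace).re * (star (h k) ⬝ᵥ h k).re / σ2)) ∧
    (∀ w : Fin K → Fin M → ℂ, (∀ k m, m ≠ k → star (h m) ⬝ᵥ w k = 0) →
      (∑ k, (star (w k) ⬝ᵥ w k).re) ≤ P →
      ∃ S : Fin K → Matrix (Fin M) (Fin M) ℂ, (∀ k, (S k).PosSemidef) ∧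
        (∑ k, ((S k).trace).re ≤ P) ∧
        ∑ k, Real.logb 2 (1 + ‖star (h k) ⬝ᵥ w k‖ ^ 2 / σ2) ≤
        ∑ k, Real.logb 2 ((σ2 + (star (h k) ⬝ᵥ (∑ i ∈ Finset.Ici k, S i).mulVec (h k)).re) /
            (σ2 + (star (h k) ⬝ᵥ (∑ i ∈ Finset.Ioi k, S i).mulVec (h k)).re))) := by
  refine ⟨fun S hS hpower => ⟨Finset.sum_le_sum fun k _ => dpcRate_le hσ h hS k, ?_⟩,
    fun w hw hpower => ?_⟩
  · have htrace k : 0 ≤ (S k).trace.re := (Complex.nonneg_iff.mp (hS k).trace_nonneg).1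
    refine ⟨matchedBeamformer h fun k => (S k).trace.re,
      isZeroForcing_matchedBeamformer horth _, ?_, fun k => zfRate_matchedBeamformer σ2 h (htrace k)⟩
    exact (Finset.sum_le_sum fun k _ => re_star_dotProduct_matchedBeamformer_le h (htrace k)).trans
      hpower
  · refine ⟨fun k => vecMulVec (w k) (star (w k)), fun k => posSemidef_vecMulVec_self_star _,
      by simpa only [trace_vecMulVec, dotProduct_comm] using hpower, ?_⟩
    exact (Finset.sum_congr rfl fun k _ => (dpcRate_vecMulVec_eq_zfRate hσ.ne' hw k).symm).le

open Matrix ComplexOrder in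
theorem stmt_4 (K M : ℕ) (h : Fin K → Fin M → ℂ)
    (hne : ∀ k, h k ≠ 0)
    (horth : ∀ k m, k ≠ m → star (h k) ⬝ᵥ h m = 0)
    (σ2 P : ℝ) (hσ : 0 < σ2) (hP : 0 ≤ P) :
    (∀ S : Fin K → Matrix (Fin M) (Fin M) ℂ, (∀ k, (S k).PosSemidef) →
      (∑ k, ((S k).trace).re ≤ P) →
      (∑ k, Real.logb 2 ((σ2 + (star (h k) ⬝ᵥ (∑ i ∈ Finset.Ici k, S i).mulVec (h k)).re) /
            (σ2 + (star (h k) ⬝ᵥ (∑ i ∈ Finset.Ioi k, S i).mulVec (h k)).re))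
        ≤ ∑ k, Real.logb 2 (1 + ((S k).trace).re * (star (h k) ⬝ᵥ h k).re / σ2)) ∧
      ∃ w : Fin K → Fin M → ℂ,
        (∀ k m, m ≠ k → star (h m) ⬝ᵥ w k = 0) ∧
        (∑ k, (star (w k) ⬝ᵥ w k).re) ≤ P ∧
        ∀ k, Real.logb 2 (1 + ‖star (h k) ⬝ᵥ w k‖ ^ 2 / σ2)
          = Real.logb 2 (1 + ((S k).trace).re * (star (h k) ⬝ᵥ h k).re / σ2)) ∧
    (∀ w : Fin K → Fin M → ℂ, (∀ k m, m ≠ k → star (h m) ⬝ᵥ w k = 0) →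
      (∑ k, (star (w k) ⬝ᵥ w k).re) ≤ P →
      ∃ S : Fin K → Matrix (Fin M) (Fin M) ℂ, (∀ k, (S k).PosSemidef) ∧
        (∑ k, ((S k).trace).re ≤ P) ∧
        ∑ k, Real.logb 2 (1 + ‖star (h k) ⬝ᵥ w k‖ ^ 2 / σ2) ≤
        ∑ k, Real.logb 2 ((σ2 + (star (h k) ⬝ᵥ (∑ i ∈ Finset.Ici k, S i).mulVec (h k)).re) /
            (σ2 + (star (h k) ⬝ᵥ (∑ i ∈ Finset.Ioi k, S i).mulVec (h k)).re))) :=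
  stmt_4_general K M h horth σ2 P hσ
end

section
/- Let Γ_1, Γ_2 > 0, P > 0, and define the Pareto curve of the two-user ZF rate region by R_1(p) = log2(1+Γ_1 p), R_2(p) = log2(1+Γ_2(P−p)) for p ∈ [0,P]. Then R_2 as a function of R_1 is strictly decreasing and strictly concave, i.e., the set {(r_1,r_2) : 0 ≤ r_1 ≤ R_1(p), 0 ≤ r_2 ≤ R_2(p), p ∈ [0,P]} parametrized by total power P is convex. -/
/-!
Let `requiredPower Γ₁ r = (2 ^ r - 1) / Γ₁` be the power user 1 needs for rate `r`; the Pareto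
boundary is `r ↦ rate Γ₂ (P - requiredPower Γ₁ r)`. Since `r ↦ 2 ^ r` is strictly convex and
increasing, `P - requiredPower Γ₁` is strictly concave and decreasing, and composing it with the
concave, increasing `p ↦ log₂ (1 + Γ₂ p)` keeps both properties. The rate region is the part of the
hypograph of the boundary above the axis `r₂ = 0`, hence convex.
-/

open Real Set

theorem strictConvexOn_rpow_left {b : ℝ} (hb : 1 < b) :
    StrictConvexOn ℝ univ (fun x : ℝ => b ^ x) := by
  have hlog : 0 < log b := log_pos hb
  refine ⟨convex_univ, fun x _ y _ hxy a c ha hc hac => ?_⟩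
  have hexp := strictConvexOn_exp.2 (mem_univ (log b * x)) (mem_univ (log b * y))
    (by simpa [hlog.ne'] using hxy) ha hc hac
  simp only [smul_eq_mul, rpow_def_of_pos (zero_lt_one.trans hb)] at hexp ⊢
  convert hexp using 2
  ring

theorem concaveOn_logb {b : ℝ} (hb : 1 ≤ b) : ConcaveOn ℝ (Ioi 0) (logb b) := by
  have h : logb b = fun x => (log b)⁻¹ * log x := by ext; simp [logb, div_eq_inv_mul]
  rw [h]
  exact strictConcaveOn_log_Ioi.concaveOn.smul (inv_nonneg.2 (log_nonneg hb))

/-- Unlike `ConcaveOn.comp_strictConcaveOn`, no concavity (hence convexity) on `f '' s` is needed. -/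
theorem ConcaveOn.comp_strictConcaveOn_of_mapsTo {E : Type*} [AddCommGroup E] [Module ℝ E]
    {s : Set E} {t : Set ℝ} {f : E → ℝ} {g : ℝ → ℝ} (hg : ConcaveOn ℝ t g)
    (hf : StrictConcaveOn ℝ s f) (hg' : StrictMonoOn g t) (hst : MapsTo f s t) :
    StrictConcaveOn ℝ s (g ∘ f) :=
  ⟨hf.1, fun _ hx _ hy hxy _ _ ha hb hab =>
    (hg.2 (hst hx) (hst hy) ha.le hb.le hab).trans_lt <|
      hg' (hg.1 (hst hx) (hst hy) ha.le hb.le hab) (hst (hf.1 hx hy ha.le hb.le hab))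
        (hf.2 hx hy hxy ha hb hab)⟩

noncomputable section

namespace TwoUserZF

def rate (Γ p : ℝ) : ℝ := logb 2 (1 + Γ * p)

def requiredPower (Γ r : ℝ) : ℝ := ((2 : ℝ) ^ r - 1) / Γ

def paretoRate (Γ₁ Γ₂ P r : ℝ) : ℝ := rate Γ₂ (P - requiredPower Γ₁ r)

def rateRegion (Γ₁ Γ₂ P : ℝ) : Set (ℝ × ℝ) :=
  {x | ∃ p ∈ Icc 0 P, 0 ≤ x.1 ∧ x.1 ≤ rate Γ₁ p ∧ 0 ≤ x.2 ∧ x.2 ≤ rate Γ₂ (P - p)}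

variable {Γ Γ₁ Γ₂ P : ℝ}

theorem strictMonoOn_rate (hΓ : 0 < Γ) : StrictMonoOn (rate Γ) (Ici 0) :=
  fun _ hp _ _ hpq => logb_lt_logb one_lt_two (add_pos_of_pos_of_nonneg one_pos (mul_nonneg hΓ.le hp)) (by gcongr)

theorem concaveOn_rate (hΓ : 0 ≤ Γ) : ConcaveOn ℝ (Ici 0) (rate Γ) := by
  let g : ℝ →ᵃ[ℝ] ℝ := (LinearMap.mul ℝ ℝ Γ).toAffineMap + AffineMap.const ℝ ℝ 1
  have hg : rate Γ = logb 2 ∘ g := by ext p; simp [g, rate, add_comm]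
  rw [hg]
  refine ((concaveOn_logb one_le_two).comp_affineMap g).subset (fun p (hp : 0 ≤ p) => ?_)
    (convex_Ici 0)
  show 0 < Γ * p + 1
  positivity

theorem requiredPower_nonneg (hΓ : 0 < Γ) {r : ℝ} (hr : 0 ≤ r) : 0 ≤ requiredPower Γ r :=
  div_nonneg (sub_nonneg.2 (one_le_rpow one_le_two hr)) hΓ.le

theorem strictMono_requiredPower (hΓ : 0 < Γ) : StrictMono (requiredPower Γ) :=
  fun _ _ hrs => div_lt_div_of_pos_right
    (sub_lt_sub_right (rpow_lt_rpow_of_exponent_lt one_lt_two hrs) 1) hΓ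

theorem strictConvexOn_requiredPower (hΓ : 0 < Γ) : StrictConvexOn ℝ univ (requiredPower Γ) := by
  refine ⟨convex_univ, fun x _ y _ hxy a b ha hb hab => ?_⟩
  have h := (strictConvexOn_rpow_left one_lt_two).2 trivial trivial hxy ha hb hab
  simp only [requiredPower, smul_eq_mul] at h ⊢
  calc ((2:ℝ) ^ (a * x + b * y) - 1) / Γ < (a * 2 ^ x + b * 2 ^ y - 1) / Γ := by gcongr
    _ = a * ((2 ^ x - 1) / Γ) + b * ((2 ^ y - 1) / Γ) := by linear_combination (1 / Γ) * hab

theorem rate_requiredPower (hΓ : Γ ≠ 0) (r : ℝ) : rate Γ (requiredPower Γ r) = r := by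
  rw [rate, requiredPower, mul_div_cancel₀ _ hΓ, add_sub_cancel, logb_rpow two_pos (by norm_num)]

theorem requiredPower_le_iff_le_rate (hΓ : 0 < Γ) {p r : ℝ} (hp : 0 ≤ p) :
    requiredPower Γ r ≤ p ↔ r ≤ rate Γ p := by
  rw [requiredPower, rate, le_logb_iff_rpow_le one_lt_two (by positivity), div_le_iff₀ hΓ]
  constructor <;> intro h <;> linarith

theorem mapsTo_requiredPower (hΓ : 0 < Γ) (hP : 0 ≤ P) :
    MapsTo (requiredPower Γ) (Icc 0 (rate Γ P)) (Icc 0 P) :=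
  fun _ hr => ⟨requiredPower_nonneg hΓ hr.1, (requiredPower_le_iff_le_rate hΓ hP).2 hr.2⟩

theorem mapsTo_sub_requiredPower (hΓ₁ : 0 < Γ₁) (hP : 0 ≤ P) :
    MapsTo (fun r => P - requiredPower Γ₁ r) (Icc 0 (rate Γ₁ P)) (Ici 0) :=
  fun _ hr => sub_nonneg.2 (mapsTo_requiredPower hΓ₁ hP hr).2

theorem strictAntiOn_paretoRate (hΓ₁ : 0 < Γ₁) (hΓ₂ : 0 < Γ₂) (hP : 0 ≤ P) :
    StrictAntiOn (paretoRate Γ₁ Γ₂ P) (Icc 0 (rate Γ₁ P)) :=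
  fun _ hr _ hs hrs => strictMonoOn_rate hΓ₂ (mapsTo_sub_requiredPower hΓ₁ hP hs)
    (mapsTo_sub_requiredPower hΓ₁ hP hr) (sub_lt_sub_left (strictMono_requiredPower hΓ₁ hrs) P)

theorem strictConcaveOn_paretoRate (hΓ₁ : 0 < Γ₁) (hΓ₂ : 0 < Γ₂) (hP : 0 ≤ P) :
    StrictConcaveOn ℝ (Icc 0 (rate Γ₁ P)) (paretoRate Γ₁ Γ₂ P) := by
  have hsub : StrictConcaveOn ℝ (Icc 0 (rate Γ₁ P)) (fun r => P - requiredPower Γ₁ r) :=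
    (((strictConvexOn_requiredPower hΓ₁).subset (subset_univ _) (convex_Icc _ _)).neg.add_const
      P).congr fun r _ => neg_add_eq_sub (requiredPower Γ₁ r) P
  exact (concaveOn_rate hΓ₂.le).comp_strictConcaveOn_of_mapsTo hsub (strictMonoOn_rate hΓ₂)
    (mapsTo_sub_requiredPower hΓ₁ hP)

theorem rateRegion_eq (hΓ₁ : 0 < Γ₁) (hΓ₂ : 0 < Γ₂) (hP : 0 ≤ P) :
    rateRegion Γ₁ Γ₂ P =
      {x | x.1 ∈ Icc 0 (rate Γ₁ P) ∧ x.2 ≤ paretoRate Γ₁ Γ₂ P x.1} ∩ {x | 0 ≤ x.2} := by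
  ext ⟨r₁, r₂⟩
  constructor
  · rintro ⟨p, hp, hr₁, hr₁p, hr₂, hr₂p⟩
    have hreq : requiredPower Γ₁ r₁ ≤ p := (requiredPower_le_iff_le_rate hΓ₁ hp.1).2 hr₁p
    refine ⟨⟨⟨hr₁, hr₁p.trans ((strictMonoOn_rate hΓ₁).monotoneOn hp.1 hP hp.2)⟩,
      hr₂p.trans ((strictMonoOn_rate hΓ₂).monotoneOn (sub_nonneg.2 hp.2) ?_ (by linarith))⟩, hr₂⟩
    exact sub_nonneg.2 (hreq.trans hp.2)
  · rintro ⟨⟨hr₁, hr₂p⟩, hr₂⟩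
    exact ⟨requiredPower Γ₁ r₁, mapsTo_requiredPower hΓ₁ hP hr₁, hr₁.1,
      (rate_requiredPower hΓ₁.ne' r₁).ge, hr₂, hr₂p⟩

end TwoUserZF

end

theorem stmt_7 (Γ1 Γ2 P : ℝ) (h1 : 0 < Γ1) (h2 : 0 < Γ2) (hP : 0 < P) :
    StrictAntiOn (fun r : ℝ => Real.logb 2 (1 + Γ2 * (P - ((2:ℝ) ^ r - 1) / Γ1)))
      (Set.Icc 0 (Real.logb 2 (1 + Γ1 * P))) ∧
    StrictConcaveOn ℝ (Set.Icc 0 (Real.logb 2 (1 + Γ1 * P)))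
      (fun r : ℝ => Real.logb 2 (1 + Γ2 * (P - ((2:ℝ) ^ r - 1) / Γ1))) ∧
    Convex ℝ {x : ℝ × ℝ | ∃ p ∈ Set.Icc (0:ℝ) P,
      0 ≤ x.1 ∧ x.1 ≤ Real.logb 2 (1 + Γ1 * p) ∧
      0 ≤ x.2 ∧ x.2 ≤ Real.logb 2 (1 + Γ2 * (P - p))} := by
  have hconcave := TwoUserZF.strictConcaveOn_paretoRate h1 h2 hP.le
  refine ⟨TwoUserZF.strictAntiOn_paretoRate h1 h2 hP.le, hconcave, ?_⟩
  change Convex ℝ (TwoUserZF.rateRegion Γ1 Γ2 P)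
  rw [TwoUserZF.rateRegion_eq h1 h2 hP.le]
  exact hconcave.concaveOn.convex_hypograph.inter
    ((convex_Ici 0).linear_preimage (LinearMap.snd ℝ ℝ ℝ))
end

section
/- Let Γ_1, Γ_2, P > 0 and define g: [0, log2(1+Γ_1 P)] → ℝ implicitly by g(R_1) = log2(1 + Γ_2(P − (2^{R_1} − 1)/Γ_1)). Then the second derivative of g is strictly negative on the interior of its domain. -/
/-! Writing the argument of the logarithm as `a - b * 2 ^ r` with `a = 1 + Γ2 * P + Γ2 / Γ1 > 0`
and `b = Γ2 / Γ1 > 0`, the first derivative is `-(b * 2 ^ r) / (a - b * 2 ^ r)` and the second is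
`-(a * b * 2 ^ r * log 2) / (a - b * 2 ^ r) ^ 2`, which is negative wherever it is defined. -/

open Topology

namespace Real

variable {a b c r : ℝ}

theorem hasDerivAt_logb_sub_mul_rpow (hc : 0 < c) (hc1 : c ≠ 1) (hr : a - b * c ^ r ≠ 0) :
    HasDerivAt (fun s => logb c (a - b * c ^ s)) (-(b * c ^ r) / (a - b * c ^ r)) r := by
  have hlog : log c ≠ 0 := log_ne_zero_of_pos_of_ne_one hc hc1
  have hu : HasDerivAt (fun s => a - b * c ^ s) (-(b * (c ^ r * log c))) r :=
    ((hasStrictDerivAt_const_rpow hc r).hasDerivAt.const_mul b).const_sub a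
  refine ((hu.log hr).div_const (log c)).congr_deriv ?_
  field_simp

theorem hasDerivAt_neg_mul_rpow_div_sub_mul_rpow (hc : 0 < c) (hr : a - b * c ^ r ≠ 0) :
    HasDerivAt (fun s => -(b * c ^ s) / (a - b * c ^ s))
      (-(a * b * c ^ r * log c) / (a - b * c ^ r) ^ 2) r := by
  have hv : HasDerivAt (fun s => b * c ^ s) (b * (c ^ r * log c)) r :=
    (hasStrictDerivAt_const_rpow hc r).hasDerivAt.const_mul b
  refine (hv.fun_neg.div (hv.const_sub a) hr).congr_deriv ?_
  ring

theorem deriv_deriv_logb_sub_mul_rpow (hc : 0 < c) (hc1 : c ≠ 1) (hr : a - b * c ^ r ≠ 0) :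
    deriv (deriv fun s => logb c (a - b * c ^ s)) r =
      -(a * b * c ^ r * log c) / (a - b * c ^ r) ^ 2 := by
  have hopen : IsOpen {s : ℝ | a - b * c ^ s ≠ 0} :=
    isOpen_ne_fun (continuous_const.sub (continuous_const.mul (continuous_const_rpow hc.ne')))
      continuous_const
  have hderiv : deriv (fun s => logb c (a - b * c ^ s)) =ᶠ[𝓝 r]
      fun s => -(b * c ^ s) / (a - b * c ^ s) := by
    filter_upwards [hopen.mem_nhds hr] with s hs
    exact (hasDerivAt_logb_sub_mul_rpow hc hc1 hs).deriv
  rw [hderiv.deriv_eq, (hasDerivAt_neg_mul_rpow_div_sub_mul_rpow hc hr).deriv]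

theorem deriv_deriv_logb_sub_mul_rpow_neg (hc : 1 < c) (ha : 0 < a) (hb : 0 < b)
    (hr : a - b * c ^ r ≠ 0) : deriv (deriv fun s => logb c (a - b * c ^ s)) r < 0 := by
  rw [deriv_deriv_logb_sub_mul_rpow (by positivity) hc.ne' hr]
  have hlog : 0 < log c := log_pos hc
  have hcr : 0 < c ^ r := rpow_pos_of_pos (by positivity) r
  exact div_neg_of_neg_of_pos (neg_neg_of_pos (by positivity)) (by positivity)

end Real

theorem stmt_8 (Γ1 Γ2 P : ℝ) (h1 : 0 < Γ1) (h2 : 0 < Γ2) (hP : 0 < P) :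
    ∀ x ∈ Set.Ioo (0:ℝ) (Real.logb 2 (1 + Γ1 * P)),
      deriv (deriv (fun r : ℝ =>
        Real.logb 2 (1 + Γ2 * (P - ((2:ℝ) ^ r - 1) / Γ1)))) x < 0 := by
  intro x hx
  have hfun : (fun r : ℝ => Real.logb 2 (1 + Γ2 * (P - ((2:ℝ) ^ r - 1) / Γ1))) =
      fun r => Real.logb 2 ((1 + Γ2 * P + Γ2 / Γ1) - Γ2 / Γ1 * 2 ^ r) := by
    funext r
    congr 1
    field_simp
    ring
  have h2x : (2:ℝ) ^ x < 1 + Γ1 * P :=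
    (Real.lt_logb_iff_rpow_lt one_lt_two (by positivity)).1 hx.2
  have hgap : 0 < Γ2 / Γ1 * (1 + Γ1 * P - 2 ^ x) := mul_pos (by positivity) (by linarith)
  have harg : 1 + Γ2 * P + Γ2 / Γ1 - Γ2 / Γ1 * 2 ^ x = 1 + Γ2 / Γ1 * (1 + Γ1 * P - 2 ^ x) := by
    field_simp
    ring
  rw [hfun]
  refine Real.deriv_deriv_logb_sub_mul_rpow_neg one_lt_two (by positivity) (by positivity) ?_
  rw [harg]
  linarith
end

section
/- Suppose for every feasible IRS phase-shift matrix Θ the correlation ρ(Θ) = |h_1(Θ)^H h_2(Θ)|/(||h_1(Θ)||·||h_2(Θ)||) > 0, and the feasible set of Θ is finite. Then there exists ρ_min > 0 such that for every static configuration the ZF rate of user 2 when r_1 > 0 satisfies r_2 ≤ log2(1 + P·G_2·(1−ρ_min^2)/σ^2) < log2(1 + P·G_2/σ^2), where G_2 = max_Θ ||h_2(Θ)||^2; hence time sharing with the single-user point (0, log2(1+P·G_2/σ^2)) yields a rate pair strictly dominating some static Pareto point. -/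
/-!
A zero-forcing beam `w₂` for user 2 must be orthogonal to `h₁`, so it only sees the component
of `h₂` orthogonal to `h₁`, whose squared norm is `‖h₂‖² (1 - ρ²)`. With finitely many phase
configurations the correlations `ρ(Θ)` attain a positive minimum `ρ_min`, so every static
configuration loses at least the factor `1 - ρ_min² < 1` against the single-user gain `P G₂`.
-/

section Correlation

variable {E : Type*} [NormedAddCommGroup E] [InnerProductSpace ℂ E]

/-- The correlation `ρ(Θ)` of `x = h₁(Θ)`, `y = h₂(Θ)`; division by zero makes it `0` when
`x = 0` or `y = 0`. -/
noncomputable def corr (x y : E) : ℝ := ‖(inner ℂ x y : ℂ)‖ / (‖x‖ * ‖y‖)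

lemma corr_nonneg (x y : E) : 0 ≤ corr x y := by
  unfold corr
  positivity

lemma corr_le_one (x y : E) : corr x y ≤ 1 :=
  div_le_one_of_le₀ (norm_inner_le_norm x y) (by positivity)

lemma one_sub_corr_sq_nonneg (x y : E) : 0 ≤ 1 - corr x y ^ 2 :=
  sub_nonneg.mpr (pow_le_one₀ (corr_nonneg x y) (corr_le_one x y))

lemma right_ne_zero_of_corr_pos {x y : E} (h : 0 < corr x y) : y ≠ 0 := by
  rintro rfl
  simp [corr] at h

lemma norm_sq_sub_norm_inner_sq_div (x y : E) :
    ‖y‖ ^ 2 - ‖(inner ℂ x y : ℂ)‖ ^ 2 / ‖x‖ ^ 2 = ‖y‖ ^ 2 * (1 - corr x y ^ 2) := by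
  rcases eq_or_ne x 0 with rfl | hx
  · simp [corr]
  rcases eq_or_ne y 0 with rfl | hy
  · simp
  have := norm_pos_iff.mpr hx
  have := norm_pos_iff.mpr hy
  unfold corr
  field_simp

/-- The part of `y` orthogonal to `x` has squared norm `‖y‖² - |⟪x, y⟫|² / ‖x‖²`; a vector `w`
orthogonal to `x` only sees that part. -/
lemma norm_inner_sq_le_of_inner_eq_zero {x y w : E} (hw : (inner ℂ x w : ℂ) = 0) :
    ‖(inner ℂ y w : ℂ)‖ ^ 2 ≤ (‖y‖ ^ 2 - ‖(inner ℂ x y : ℂ)‖ ^ 2 / ‖x‖ ^ 2) * ‖w‖ ^ 2 := by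
  rcases eq_or_ne x 0 with rfl | hx
  · simpa [mul_pow] using pow_le_pow_left₀ (norm_nonneg _) (norm_inner_le_norm (𝕜 := ℂ) y w) 2
  have hx2 : (0 : ℝ) < ‖x‖ ^ 2 := by positivity
  set a : ℂ := inner ℂ x y
  set c : ℂ := a / ((‖x‖ ^ 2 : ℝ) : ℂ)
  have hv_inner : (inner ℂ (y - c • x) w : ℂ) = inner ℂ y w := by
    rw [inner_sub_left, inner_smul_left, hw, mul_zero, sub_zero]
  have hv_norm : ‖y - c • x‖ ^ 2 = ‖y‖ ^ 2 - ‖a‖ ^ 2 / ‖x‖ ^ 2 := by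
    have h_cross : (inner ℂ y (c • x) : ℂ) = ((‖a‖ ^ 2 / ‖x‖ ^ 2 : ℝ) : ℂ) := by
      rw [inner_smul_right, ← inner_conj_symm, div_mul_eq_mul_div, Complex.mul_conj,
        Complex.normSq_eq_norm_sq]
      push_cast
      ring
    have h_proj : ‖c • x‖ ^ 2 = ‖a‖ ^ 2 / ‖x‖ ^ 2 := by
      rw [norm_smul, norm_div, Complex.norm_real, Real.norm_of_nonneg hx2.le]
      field_simp
    rw [@norm_sub_sq ℂ, h_cross, RCLike.re_to_complex, Complex.ofReal_re, h_proj]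
    ring
  calc ‖(inner ℂ y w : ℂ)‖ ^ 2 = ‖(inner ℂ (y - c • x) w : ℂ)‖ ^ 2 := by rw [hv_inner]
    _ ≤ (‖y - c • x‖ * ‖w‖) ^ 2 := pow_le_pow_left₀ (norm_nonneg _) (norm_inner_le_norm _ _) 2
    _ = (‖y‖ ^ 2 - ‖a‖ ^ 2 / ‖x‖ ^ 2) * ‖w‖ ^ 2 := by rw [mul_pow, hv_norm]

lemma norm_inner_sq_le_corr {x y w : E} (hw : (inner ℂ x w : ℂ) = 0) :
    ‖(inner ℂ y w : ℂ)‖ ^ 2 ≤ ‖y‖ ^ 2 * (1 - corr x y ^ 2) * ‖w‖ ^ 2 := by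
  simpa only [norm_sq_sub_norm_inner_sq_div] using norm_inner_sq_le_of_inner_eq_zero (y := y) hw

lemma norm_inner_sq_le_of_le_corr {x y w : E} {r G P : ℝ} (hw : (inner ℂ x w : ℂ) = 0)
    (hr : 0 ≤ r) (hr_le : r ≤ corr x y) (hG : ‖y‖ ^ 2 ≤ G) (hP : ‖w‖ ^ 2 ≤ P) :
    ‖(inner ℂ y w : ℂ)‖ ^ 2 ≤ P * G * (1 - r ^ 2) := by
  have h_factor : 1 - corr x y ^ 2 ≤ 1 - r ^ 2 := by gcongr
  have hr_factor : 0 ≤ 1 - r ^ 2 := (one_sub_corr_sq_nonneg x y).trans h_factor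
  calc ‖(inner ℂ y w : ℂ)‖ ^ 2 ≤ ‖y‖ ^ 2 * (1 - corr x y ^ 2) * ‖w‖ ^ 2 := norm_inner_sq_le_corr hw
    _ ≤ G * (1 - r ^ 2) * P :=
      mul_le_mul (mul_le_mul hG h_factor (one_sub_corr_sq_nonneg x y) ((sq_nonneg _).trans hG))
        hP (sq_nonneg _) (mul_nonneg ((sq_nonneg _).trans hG) hr_factor)
    _ = P * G * (1 - r ^ 2) := by ring

end Correlation

lemma logb_one_add_div_strictMonoOn {σ : ℝ} (hσ : 0 < σ) :
    StrictMonoOn (fun s => Real.logb 2 (1 + s / σ)) (Set.Ici 0) := by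
  intro s hs t _ hst
  have hs' : 0 ≤ s / σ := div_nonneg hs hσ.le
  exact Real.logb_lt_logb one_lt_two (by linarith)
    (by linarith [div_lt_div_of_pos_right hst hσ])

theorem stmt_19_general (M : ℕ) {ι : Type*} [Fintype ι] [Nonempty ι]
    (h1 h2 : ι → EuclideanSpace ℂ (Fin M))
    (hρ : ∀ θ, 0 < ‖(inner ℂ (h1 θ) (h2 θ) : ℂ)‖ / (‖h1 θ‖ * ‖h2 θ‖))
    (P σ2 : ℝ) (hP : 0 < P) (hσ : 0 < σ2) :
    ∃ ρmin > 0,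
      (∀ θ, ρmin ≤ ‖(inner ℂ (h1 θ) (h2 θ) : ℂ)‖ / (‖h1 θ‖ * ‖h2 θ‖)) ∧
      ∀ θ (w1 w2 : EuclideanSpace ℂ (Fin M)),
        (inner ℂ (h1 θ) w2 : ℂ) = 0 → (inner ℂ (h2 θ) w1 : ℂ) = 0 →
        ‖w1‖ ^ 2 + ‖w2‖ ^ 2 ≤ P → 0 < ‖(inner ℂ (h1 θ) w1 : ℂ)‖ →
        Real.logb 2 (1 + ‖(inner ℂ (h2 θ) w2 : ℂ)‖ ^ 2 / σ2)
            ≤ Real.logb 2 (1 + P * (⨆ θ', ‖h2 θ'‖ ^ 2) * (1 - ρmin ^ 2) / σ2) ∧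
        Real.logb 2 (1 + P * (⨆ θ', ‖h2 θ'‖ ^ 2) * (1 - ρmin ^ 2) / σ2)
            < Real.logb 2 (1 + P * (⨆ θ', ‖h2 θ'‖ ^ 2) / σ2) := by
  obtain ⟨θ₀, hθ₀⟩ := Finite.exists_min fun θ => corr (h1 θ) (h2 θ)
  set ρmin := corr (h1 θ₀) (h2 θ₀)
  set G₂ := ⨆ θ', ‖h2 θ'‖ ^ 2
  have hG₂ : ∀ θ, ‖h2 θ‖ ^ 2 ≤ G₂ := le_ciSup (Set.finite_range _).bddAbove
  have hG₂_pos : 0 < G₂ :=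
    (pow_pos (norm_pos_iff.mpr (right_ne_zero_of_corr_pos (hρ θ₀))) 2).trans_le (hG₂ θ₀)
  have hρmin_pos : 0 < ρmin := hρ θ₀
  refine ⟨ρmin, hρmin_pos, hθ₀, fun θ w1 w2 hw2 _ hpower _ => ?_⟩
  have h_gain : ‖(inner ℂ (h2 θ) w2 : ℂ)‖ ^ 2 ≤ P * G₂ * (1 - ρmin ^ 2) :=
    norm_inner_sq_le_of_le_corr hw2 hρmin_pos.le (hθ₀ θ) (hG₂ θ) (by linarith [sq_nonneg ‖w1‖])
  have h_loss : P * G₂ * (1 - ρmin ^ 2) < P * G₂ := by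
    have := mul_pos (mul_pos hP hG₂_pos) (pow_pos hρmin_pos 2)
    linarith
  have h_nonneg : 0 ≤ P * G₂ * (1 - ρmin ^ 2) :=
    mul_nonneg (by positivity) (one_sub_corr_sq_nonneg _ _)
  have hmono := logb_one_add_div_strictMonoOn hσ
  exact ⟨hmono.monotoneOn (Set.mem_Ici.mpr (by positivity)) h_nonneg h_gain,
    hmono h_nonneg (h_nonneg.trans h_loss.le) h_loss⟩

theorem stmt_19 (M : ℕ) {ι : Type*} [Fintype ι] [Nonempty ι]
    (h1 h2 : ι → EuclideanSpace ℂ (Fin M))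
    (hne1 : ∀ θ, h1 θ ≠ 0) (hne2 : ∀ θ, h2 θ ≠ 0)
    (hρ : ∀ θ, 0 < ‖(inner ℂ (h1 θ) (h2 θ) : ℂ)‖ / (‖h1 θ‖ * ‖h2 θ‖))
    (P σ2 : ℝ) (hP : 0 < P) (hσ : 0 < σ2) :
    ∃ ρmin > 0,
      (∀ θ, ρmin ≤ ‖(inner ℂ (h1 θ) (h2 θ) : ℂ)‖ / (‖h1 θ‖ * ‖h2 θ‖)) ∧
      ∀ θ (w1 w2 : EuclideanSpace ℂ (Fin M)),
        (inner ℂ (h1 θ) w2 : ℂ) = 0 → (inner ℂ (h2 θ) w1 : ℂ) = 0 →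
        ‖w1‖ ^ 2 + ‖w2‖ ^ 2 ≤ P → 0 < ‖(inner ℂ (h1 θ) w1 : ℂ)‖ →
        Real.logb 2 (1 + ‖(inner ℂ (h2 θ) w2 : ℂ)‖ ^ 2 / σ2)
            ≤ Real.logb 2 (1 + P * (⨆ θ', ‖h2 θ'‖ ^ 2) * (1 - ρmin ^ 2) / σ2) ∧
        Real.logb 2 (1 + P * (⨆ θ', ‖h2 θ'‖ ^ 2) * (1 - ρmin ^ 2) / σ2)
            < Real.logb 2 (1 + P * (⨆ θ', ‖h2 θ'‖ ^ 2) / σ2) :=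
  stmt_19_general M h1 h2 hρ P σ2 hP hσ
end
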